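/- For all r₁, r₂ > 0: 4πμ₁·∑_{m=0}^∞ [(r̃/(m+1))·f(r̃/(m+1)) − (r̃/(m+r̃₂))·f(−r̃/(m+r̃₂))] + 4πμ₂·∑_{m=0}^∞ [(r̃/(m+r̃₁))·f(r̃/(m+r̃₁)) − (r̃/(m+1))·f(−r̃/(m+1))] = ∑_{k=1}^∞ b_k·Q_k(r₁,r₂), all series converging absolutely. -/
import Mathlib


open Real

noncomputable section

/-- The digamma value `ψ₀(z) = −γ + ∑_{k≥0} (z−1)/((k+1)(k+z))`. -/
def digammaVal (z : ℝ) : ℝ :=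
  -Real.eulerMascheroniConstant + ∑' k : ℕ, (z - 1) / ((k + 1) * (k + z))

/-- The polygamma value `ψ_k(z) = (−1)^{k+1} k! ∑_{m≥0} (m+z)^{−(k+1)}` (for `k ≥ 1`). -/
def polygammaVal (k : ℕ) (z : ℝ) : ℝ :=
  (-1) ^ (k + 1) * (k.factorial : ℝ) * ∑' m : ℕ, 1 / ((m : ℝ) + z) ^ (k + 1)

/-- The Riemann zeta value `ζ(s) = ∑_{n≥1} n^{−s}` (for `s ≥ 2`). -/
def zetaVal (s : ℕ) : ℝ := ∑' n : ℕ, 1 / ((n : ℝ) + 1) ^ s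

def rTilde (r₁ r₂ : ℝ) : ℝ := r₁ * r₂ / (r₁ + r₂)

/-- `μ_j` for `j = 1, 2`. -/
def muConst (r₁ r₂ : ℝ) (j : ℕ) : ℝ :=
  (digammaVal ((if j = 1 then r₁ else r₂) / (r₁ + r₂)) + Real.eulerMascheroniConstant) /
    (digammaVal (r₁ / (r₁ + r₂)) + digammaVal (r₂ / (r₁ + r₂)) +
      2 * Real.eulerMascheroniConstant)

/-- The coefficient `Q_k(r₁,r₂)` (for `k ≥ 1`). -/
def Q (k : ℕ) (r₁ r₂ : ℝ) : ℝ :=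
  4 * Real.pi * rTilde r₁ r₂ ^ (k + 1) *
    ((muConst r₁ r₂ 1 + (-1) ^ (k + 1) * muConst r₁ r₂ 2) * zetaVal (k + 1) +
      (muConst r₁ r₂ 1 * polygammaVal k (r₂ / (r₁ + r₂)) +
        (-1) ^ (k + 1) * muConst r₁ r₂ 2 * polygammaVal k (r₁ / (r₁ + r₂))) /
      (k.factorial : ℝ))

/-- Auxiliary double-indexed family. -/
def TT (b : ℕ → ℝ) (c z s : ℝ) : ℕ × ℕ → ℝ :=
  fun p => b (p.2 + 1) * s ^ p.2 * (c / ((p.1 : ℝ) + z)) ^ (p.2 + 2)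

lemma aux_bshift {b : ℕ → ℝ}
    (hbsum : ∀ R > 0, Summable fun k : ℕ => |b k| * R ^ k) {R : ℝ} (hR : 0 < R) :
    Summable fun k : ℕ => |b (k + 1)| * R ^ k := by
  have h : Summable fun k : ℕ => |b (k + 1)| * R ^ (k + 1) :=
    (summable_nat_add_iff 1).2 (hbsum R hR)
  refine (h.mul_left R⁻¹).congr fun k => ?_
  rw [pow_succ]
  field_simp

lemma aux_invsq {z : ℝ} (hz : 0 < z) :
    Summable fun m : ℕ => (1 / ((m : ℝ) + z)) ^ 2 := by
  have h1 : Summable fun m : ℕ => (1 / ((m : ℝ) + 1)) ^ 2 := by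
    have h0 : Summable fun n : ℕ => 1 / (n : ℝ) ^ 2 := summable_one_div_nat_pow.2 one_lt_two
    have h2 := (summable_nat_add_iff 1).2 h0
    refine h2.congr fun n => ?_
    push_cast
    rw [div_pow, one_pow]
  have hc0 : 0 < min z 1 := lt_min hz one_pos
  refine Summable.of_nonneg_of_le (fun m => by positivity) (fun m => ?_)
    (h1.mul_left ((1 / min z 1) ^ 2))
  have hm : (0:ℝ) ≤ (m:ℝ) := Nat.cast_nonneg m
  have key : min z 1 * ((m : ℝ) + 1) ≤ (m : ℝ) + z := by
    have h₁ : min z 1 ≤ z := min_le_left _ _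
    have h₂ : min z 1 ≤ 1 := min_le_right _ _
    nlinarith
  have h3 : 1 / ((m:ℝ) + z) ≤ 1 / (min z 1 * ((m:ℝ)+1)) :=
    one_div_le_one_div_of_le (by positivity) key
  calc (1 / ((m:ℝ)+z))^2 ≤ (1 / (min z 1 * ((m:ℝ)+1)))^2 :=
        pow_le_pow_left₀ (by positivity) h3 2
    _ = (1 / min z 1)^2 * (1/((m:ℝ)+1))^2 := by
        rw [← mul_pow, one_div_mul_one_div]

lemma aux_TT_abs {b : ℕ → ℝ}
    (hbsum : ∀ R > 0, Summable fun k : ℕ => |b k| * R ^ k)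
    {c z s : ℝ} (hc : 0 < c) (hz : 0 < z) (hs : |s| ≤ 1) :
    Summable fun p : ℕ × ℕ => |TT b c z s p| := by
  have hmaj : Summable fun p : ℕ × ℕ =>
      (1 / ((p.1 : ℝ) + z)) ^ 2 * (c ^ 2 * (|b (p.2 + 1)| * (c / z) ^ p.2)) := by
    refine (aux_invsq hz).mul_of_nonneg
      ((aux_bshift hbsum (div_pos hc hz)).mul_left (c ^ 2)) ?_ ?_
    · intro m; positivity
    · intro k; positivity
  refine Summable.of_nonneg_of_le (fun p => abs_nonneg _) (fun p => ?_) hmaj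
  obtain ⟨m, k⟩ := p
  have hx : (0:ℝ) < (m:ℝ) + z := by positivity
  have hdp : 0 < c / ((m:ℝ) + z) := div_pos hc hx
  have h3 : c / ((m:ℝ)+z) ≤ c / z := by
    gcongr
    linarith [Nat.cast_nonneg (α := ℝ) m]
  calc |TT b c z s (m, k)|
      = |b (k+1)| * (|s| ^ k * ((c / ((m:ℝ)+z)) ^ k * (c / ((m:ℝ)+z)) ^ 2)) := by
        rw [TT]
        rw [abs_mul, abs_mul, abs_pow, abs_pow, abs_of_pos hdp, ← pow_add, mul_assoc]
    _ ≤ |b (k+1)| * (1 ^ k * ((c / z) ^ k * (c / ((m:ℝ)+z)) ^ 2)) := by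
        gcongr
    _ = (1 / ((m:ℝ) + z)) ^ 2 * (c ^ 2 * (|b (k + 1)| * (c / z) ^ k)) := by
        rw [one_pow, div_pow c, div_pow 1]
        field_simp

lemma aux_expand {b : ℕ → ℝ} {f : ℝ → ℝ} (hb0 : b 0 = 0)
    (hbsum : ∀ R > 0, Summable fun k : ℕ => |b k| * R ^ k)
    (hf : ∀ t : ℝ, f t = ∑' k : ℕ, b k * t ^ k)
    {c z ε : ℝ} (hc : 0 < c) (hz : 0 < z) (hε : ε = 1 ∨ ε = -1) (m : ℕ) :
    ε * (c / ((m : ℝ) + z)) * f (ε * (c / ((m : ℝ) + z))) = ∑' k : ℕ, TT b c z ε (m, k) := by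
  have hx : (0:ℝ) < (m:ℝ) + z := by positivity
  set t := c / ((m:ℝ) + z) with htdef
  have ht : 0 < t := div_pos hc hx
  have hεabs : |ε| = 1 := by rcases hε with h | h <;> simp [h]
  have hε2 : ε ^ 2 = 1 := by rcases hε with h | h <;> norm_num [h]
  have hsum : Summable fun k : ℕ => b k * ε ^ (k+1) * t ^ (k+1) := by
    refine Summable.of_norm ?_
    refine Summable.of_nonneg_of_le (fun k => norm_nonneg _) (fun k => ?_)
      ((hbsum t ht).mul_left t)
    calc ‖b k * ε ^ (k+1) * t ^ (k+1)‖ = t * (|b k| * t ^ k) := by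
          rw [Real.norm_eq_abs, abs_mul, abs_mul, abs_pow, abs_pow, hεabs, one_pow, mul_one,
            abs_of_pos ht, pow_succ]
          ring
      _ ≤ t * (|b k| * t ^ k) := le_rfl
  have expand : ε * t * f (ε * t) = ∑' k : ℕ, b k * ε ^ (k+1) * t ^ (k+1) := by
    rw [hf (ε * t), ← tsum_mul_left]
    exact tsum_congr fun k => by rw [mul_pow]; ring
  rw [expand, Summable.tsum_eq_zero_add hsum]
  simp only [hb0, zero_mul, zero_add]
  refine tsum_congr fun k => ?_
  show b (k+1) * ε ^ (k+1+1) * t ^ (k+1+1) = b (k+1) * ε ^ k * t ^ (k+2)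
  have hε' : ε ^ (k+1+1) = ε ^ k := by
    rw [show k+1+1 = k+2 from rfl, pow_add, hε2, mul_one]
  rw [hε']

theorem stmt8 (r₁ r₂ : ℝ) (hr₁ : 0 < r₁) (hr₂ : 0 < r₂)
    (f : ℝ → ℝ) (b : ℕ → ℝ) (hb0 : b 0 = 0)
    (hbsum : ∀ R > 0, Summable fun k : ℕ => |b k| * R ^ k)
    (hf : ∀ t : ℝ, f t = ∑' k : ℕ, b k * t ^ k) :
    (Summable fun m : ℕ =>
      |(rTilde r₁ r₂ / (m + 1)) * f (rTilde r₁ r₂ / (m + 1)) -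
        (rTilde r₁ r₂ / (m + r₂ / (r₁ + r₂))) * f (-(rTilde r₁ r₂ / (m + r₂ / (r₁ + r₂))))|) ∧
    (Summable fun m : ℕ =>
      |(rTilde r₁ r₂ / (m + r₁ / (r₁ + r₂))) * f (rTilde r₁ r₂ / (m + r₁ / (r₁ + r₂))) -
        (rTilde r₁ r₂ / (m + 1)) * f (-(rTilde r₁ r₂ / (m + 1)))|) ∧
    (Summable fun k : ℕ => |b (k + 1) * Q (k + 1) r₁ r₂|) ∧
    4 * Real.pi * muConst r₁ r₂ 1 *
        (∑' m : ℕ, ((rTilde r₁ r₂ / (m + 1)) * f (rTilde r₁ r₂ / (m + 1)) -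
          (rTilde r₁ r₂ / (m + r₂ / (r₁ + r₂))) *
            f (-(rTilde r₁ r₂ / (m + r₂ / (r₁ + r₂)))))) +
      4 * Real.pi * muConst r₁ r₂ 2 *
        (∑' m : ℕ, ((rTilde r₁ r₂ / (m + r₁ / (r₁ + r₂))) *
            f (rTilde r₁ r₂ / (m + r₁ / (r₁ + r₂))) -
          (rTilde r₁ r₂ / (m + 1)) * f (-(rTilde r₁ r₂ / (m + 1))))) =
      ∑' k : ℕ, b (k + 1) * Q (k + 1) r₁ r₂ := by
  have hr12 : 0 < r₁ + r₂ := by linarith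
  set c := rTilde r₁ r₂ with hcdef
  have hc : 0 < c := by rw [hcdef]; unfold rTilde; positivity
  set z₁ := r₁ / (r₁ + r₂) with hz1def
  set z₂ := r₂ / (r₁ + r₂) with hz2def
  have hz₁ : 0 < z₁ := by rw [hz1def]; positivity
  have hz₂ : 0 < z₂ := by rw [hz2def]; positivity
  set μ₁ := muConst r₁ r₂ 1 with hμ1def
  set μ₂ := muConst r₁ r₂ 2 with hμ2def
  set T₁ := TT b c 1 1 with hT1
  set T₂ := TT b c z₂ (-1) with hT2
  set T₃ := TT b c z₁ 1 with hT3
  set T₄ := TT b c 1 (-1) with hT4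
  have habs₁ : Summable fun p : ℕ × ℕ => |T₁ p| := by
    rw [hT1]; exact aux_TT_abs hbsum hc one_pos (by norm_num)
  have habs₂ : Summable fun p : ℕ × ℕ => |T₂ p| := by
    rw [hT2]; exact aux_TT_abs hbsum hc hz₂ (by norm_num)
  have habs₃ : Summable fun p : ℕ × ℕ => |T₃ p| := by
    rw [hT3]; exact aux_TT_abs hbsum hc hz₁ (by norm_num)
  have habs₄ : Summable fun p : ℕ × ℕ => |T₄ p| := by
    rw [hT4]; exact aux_TT_abs hbsum hc one_pos (by norm_num)
  have hsT₁ : Summable T₁ := habs₁.of_abs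
  have hsT₂ : Summable T₂ := habs₂.of_abs
  have hsT₃ : Summable T₃ := habs₃.of_abs
  have hsT₄ : Summable T₄ := habs₄.of_abs
  have hkfib₁ : ∀ m : ℕ, Summable fun k : ℕ => T₁ (m, k) := fun m => hsT₁.prod_factor m
  have hkfib₂ : ∀ m : ℕ, Summable fun k : ℕ => T₂ (m, k) := fun m => hsT₂.prod_factor m
  have hkfib₃ : ∀ m : ℕ, Summable fun k : ℕ => T₃ (m, k) := fun m => hsT₃.prod_factor m
  have hkfib₄ : ∀ m : ℕ, Summable fun k : ℕ => T₄ (m, k) := fun m => hsT₄.prod_factor m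
  have hmfib₁ : ∀ k : ℕ, Summable fun m : ℕ => T₁ (m, k) := fun k =>
    (hsT₁.prod_symm.prod_factor k).congr fun m => rfl
  have hmfib₂ : ∀ k : ℕ, Summable fun m : ℕ => T₂ (m, k) := fun k =>
    (hsT₂.prod_symm.prod_factor k).congr fun m => rfl
  have hmfib₃ : ∀ k : ℕ, Summable fun m : ℕ => T₃ (m, k) := fun k =>
    (hsT₃.prod_symm.prod_factor k).congr fun m => rfl
  have hmfib₄ : ∀ k : ℕ, Summable fun m : ℕ => T₄ (m, k) := fun k =>
    (hsT₄.prod_symm.prod_factor k).congr fun m => rfl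
  -- expansion of the left-hand summands
  have hA : ∀ m : ℕ, c / (↑m + 1) * f (c / (↑m + 1)) -
      c / (↑m + z₂) * f (-(c / (↑m + z₂))) = ∑' k : ℕ, (T₁ (m, k) + T₂ (m, k)) := by
    intro m
    have e1 := aux_expand hb0 hbsum hf hc one_pos (Or.inl rfl) m
    have e2 := aux_expand hb0 hbsum hf hc hz₂ (Or.inr rfl) m
    rw [← hT1] at e1
    rw [← hT2] at e2
    simp only [one_mul, neg_one_mul] at e1 e2
    rw [Summable.tsum_add (hkfib₁ m) (hkfib₂ m), ← e1, ← e2]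
    ring
  have hB : ∀ m : ℕ, c / (↑m + z₁) * f (c / (↑m + z₁)) -
      c / (↑m + 1) * f (-(c / (↑m + 1))) = ∑' k : ℕ, (T₃ (m, k) + T₄ (m, k)) := by
    intro m
    have e1 := aux_expand hb0 hbsum hf hc hz₁ (Or.inl rfl) m
    have e2 := aux_expand hb0 hbsum hf hc one_pos (Or.inr rfl) m
    rw [← hT3] at e1
    rw [← hT4] at e2
    simp only [one_mul, neg_one_mul] at e1 e2
    rw [Summable.tsum_add (hkfib₃ m) (hkfib₄ m), ← e1, ← e2]
    ring
  -- claim 1 and claim 2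
  have hM₁ : Summable fun m : ℕ => ∑' k : ℕ, (|T₁ (m, k)| + |T₂ (m, k)|) :=
    ((summable_prod_of_nonneg (by intro p; positivity)).1 (habs₁.add habs₂)).2
  have hM₂ : Summable fun m : ℕ => ∑' k : ℕ, (|T₃ (m, k)| + |T₄ (m, k)|) :=
    ((summable_prod_of_nonneg (by intro p; positivity)).1 (habs₃.add habs₄)).2
  have claim1 : Summable fun m : ℕ =>
      |c / (↑m + 1) * f (c / (↑m + 1)) - c / (↑m + z₂) * f (-(c / (↑m + z₂)))| := by
    refine Summable.of_nonneg_of_le (fun m => abs_nonneg _) (fun m => ?_) hM₁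
    rw [hA m]
    have hn : Summable fun k : ℕ => |T₁ (m, k) + T₂ (m, k)| := ((hkfib₁ m).add (hkfib₂ m)).abs
    calc |∑' k : ℕ, (T₁ (m, k) + T₂ (m, k))| ≤ ∑' k : ℕ, |T₁ (m, k) + T₂ (m, k)| := by
          simpa [Real.norm_eq_abs] using
            norm_tsum_le_tsum_norm (f := fun k : ℕ => T₁ (m, k) + T₂ (m, k))
              (by simpa [Real.norm_eq_abs] using hn)
      _ ≤ ∑' k : ℕ, (|T₁ (m, k)| + |T₂ (m, k)|) :=
          Summable.tsum_le_tsum (fun k => abs_add_le _ _) hn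
            ((habs₁.prod_factor m).add (habs₂.prod_factor m))
  have claim2 : Summable fun m : ℕ =>
      |c / (↑m + z₁) * f (c / (↑m + z₁)) - c / (↑m + 1) * f (-(c / (↑m + 1)))| := by
    refine Summable.of_nonneg_of_le (fun m => abs_nonneg _) (fun m => ?_) hM₂
    rw [hB m]
    have hn : Summable fun k : ℕ => |T₃ (m, k) + T₄ (m, k)| := ((hkfib₃ m).add (hkfib₄ m)).abs
    calc |∑' k : ℕ, (T₃ (m, k) + T₄ (m, k))| ≤ ∑' k : ℕ, |T₃ (m, k) + T₄ (m, k)| := by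
          simpa [Real.norm_eq_abs] using
            norm_tsum_le_tsum_norm (f := fun k : ℕ => T₃ (m, k) + T₄ (m, k))
              (by simpa [Real.norm_eq_abs] using hn)
      _ ≤ ∑' k : ℕ, (|T₃ (m, k)| + |T₄ (m, k)|) :=
          Summable.tsum_le_tsum (fun k => abs_add_le _ _) hn
            ((habs₃.prod_factor m).add (habs₄.prod_factor m))
  -- the Q identity
  have hQ : ∀ k : ℕ, b (k + 1) * Q (k + 1) r₁ r₂ =
      4 * π * ∑' m : ℕ, (μ₁ * (T₁ (m, k) + T₂ (m, k)) + μ₂ * (T₃ (m, k) + T₄ (m, k))) := by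
    intro k
    have hTsum : ∀ (z s : ℝ), (∑' m : ℕ, TT b c z s (m, k)) =
        b (k + 1) * s ^ k * (c ^ (k + 2) * ∑' m : ℕ, 1 / ((m : ℝ) + z) ^ (k + 2)) := by
      intro z s
      calc (∑' m : ℕ, TT b c z s (m, k))
          = ∑' m : ℕ, (b (k + 1) * s ^ k * c ^ (k + 2)) * (1 / ((m : ℝ) + z) ^ (k + 2)) :=
            tsum_congr fun m => by
              show b (k + 1) * s ^ k * (c / ((m : ℝ) + z)) ^ (k + 2) = _
              rw [div_pow]
              ring
        _ = b (k + 1) * s ^ k * (c ^ (k + 2) * ∑' m : ℕ, 1 / ((m : ℝ) + z) ^ (k + 2)) := by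
            rw [tsum_mul_left]; ring
    have hsplit : (∑' m : ℕ, (μ₁ * (T₁ (m, k) + T₂ (m, k)) + μ₂ * (T₃ (m, k) + T₄ (m, k)))) =
        μ₁ * ((∑' m : ℕ, T₁ (m, k)) + ∑' m : ℕ, T₂ (m, k)) +
          μ₂ * ((∑' m : ℕ, T₃ (m, k)) + ∑' m : ℕ, T₄ (m, k)) := by
      rw [Summable.tsum_add (((hmfib₁ k).add (hmfib₂ k)).mul_left μ₁)
          (((hmfib₃ k).add (hmfib₄ k)).mul_left μ₂),
        tsum_mul_left, tsum_mul_left, Summable.tsum_add (hmfib₁ k) (hmfib₂ k),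
        Summable.tsum_add (hmfib₃ k) (hmfib₄ k)]
    rw [hsplit, hT1, hT2, hT3, hT4, hTsum, hTsum, hTsum, hTsum]
    have hfac : ((k + 1).factorial : ℝ) ≠ 0 := Nat.cast_ne_zero.2 (Nat.factorial_ne_zero _)
    have hsg : ((-1 : ℝ)) ^ (k + 1 + 1) = (-1 : ℝ) ^ k := by
      rw [pow_succ, pow_succ]; ring
    simp only [Q, zetaVal, polygammaVal]
    rw [← hcdef, ← hz1def, ← hz2def, ← hμ1def, ← hμ2def, hsg]
    rw [show k + 1 + 1 = k + 2 from rfl]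
    rw [one_pow]
    rcases Nat.even_or_odd k with hk | hk <;>
      simp only [hk.neg_one_pow] <;> field_simp <;> ring
  -- the majorant for claim 3
  have hMajS : Summable fun p : ℕ × ℕ =>
      |μ₁| * (|T₁ p| + |T₂ p|) + |μ₂| * (|T₃ p| + |T₄ p|) :=
    ((habs₁.add habs₂).mul_left |μ₁|).add ((habs₃.add habs₄).mul_left |μ₂|)
  have hGple : ∀ p : ℕ × ℕ, |μ₁ * (T₁ p + T₂ p) + μ₂ * (T₃ p + T₄ p)| ≤
      |μ₁| * (|T₁ p| + |T₂ p|) + |μ₂| * (|T₃ p| + |T₄ p|) := by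
    intro p
    calc |μ₁ * (T₁ p + T₂ p) + μ₂ * (T₃ p + T₄ p)|
        ≤ |μ₁ * (T₁ p + T₂ p)| + |μ₂ * (T₃ p + T₄ p)| := abs_add_le _ _
      _ = |μ₁| * |T₁ p + T₂ p| + |μ₂| * |T₃ p + T₄ p| := by rw [abs_mul, abs_mul]
      _ ≤ |μ₁| * (|T₁ p| + |T₂ p|) + |μ₂| * (|T₃ p| + |T₄ p|) := by
          gcongr <;> exact abs_add_le _ _
  have hGabs : Summable fun p : ℕ × ℕ => |μ₁ * (T₁ p + T₂ p) + μ₂ * (T₃ p + T₄ p)| :=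
    Summable.of_nonneg_of_le (fun p => abs_nonneg _) hGple hMajS
  have hGs : Summable fun p : ℕ × ℕ => μ₁ * (T₁ p + T₂ p) + μ₂ * (T₃ p + T₄ p) := hGabs.of_abs
  have hGmfib : ∀ k : ℕ, Summable fun m : ℕ =>
      μ₁ * (T₁ (m, k) + T₂ (m, k)) + μ₂ * (T₃ (m, k) + T₄ (m, k)) := fun k =>
    (((hmfib₁ k).add (hmfib₂ k)).mul_left μ₁).add (((hmfib₃ k).add (hmfib₄ k)).mul_left μ₂)
  have hMmfib : ∀ k : ℕ, Summable fun m : ℕ =>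
      |μ₁| * (|T₁ (m, k)| + |T₂ (m, k)|) + |μ₂| * (|T₃ (m, k)| + |T₄ (m, k)|) := fun k =>
    ((((habs₁.prod_symm.prod_factor k).congr fun m => rfl).add
        ((habs₂.prod_symm.prod_factor k).congr fun m => rfl)).mul_left |μ₁|).add
      ((((habs₃.prod_symm.prod_factor k).congr fun m => rfl).add
        ((habs₄.prod_symm.prod_factor k).congr fun m => rfl)).mul_left |μ₂|)
  have hcol : Summable fun k : ℕ => ∑' m : ℕ,
      (|μ₁| * (|T₁ (m, k)| + |T₂ (m, k)|) + |μ₂| * (|T₃ (m, k)| + |T₄ (m, k)|)) := by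
    have h := hMajS.prod_symm
    have h2 := ((summable_prod_of_nonneg (by intro p; positivity)).1 h).2
    exact h2.congr fun k => tsum_congr fun m => rfl
  have claim3 : Summable fun k : ℕ => |b (k + 1) * Q (k + 1) r₁ r₂| := by
    refine Summable.of_nonneg_of_le (fun k => abs_nonneg _) (fun k => ?_)
      (hcol.mul_left (4 * π))
    rw [hQ k, abs_mul, abs_of_pos (show (0:ℝ) < 4 * π by positivity)]
    refine mul_le_mul_of_nonneg_left ?_ (by positivity)
    calc |∑' m : ℕ, (μ₁ * (T₁ (m, k) + T₂ (m, k)) + μ₂ * (T₃ (m, k) + T₄ (m, k)))|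
        ≤ ∑' m : ℕ, |μ₁ * (T₁ (m, k) + T₂ (m, k)) + μ₂ * (T₃ (m, k) + T₄ (m, k))| := by
          simpa [Real.norm_eq_abs] using
            norm_tsum_le_tsum_norm
              (f := fun m : ℕ => μ₁ * (T₁ (m, k) + T₂ (m, k)) + μ₂ * (T₃ (m, k) + T₄ (m, k)))
              (by simpa [Real.norm_eq_abs] using (hGmfib k).abs)
      _ ≤ ∑' m : ℕ, (|μ₁| * (|T₁ (m, k)| + |T₂ (m, k)|) + |μ₂| * (|T₃ (m, k)| + |T₄ (m, k)|)) :=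
          Summable.tsum_le_tsum (fun m => hGple (m, k)) (hGmfib k).abs (hMmfib k)
  refine ⟨claim1, claim2, claim3, ?_⟩
  -- the main identity
  have hsumA : Summable fun m : ℕ => ∑' k : ℕ, (T₁ (m, k) + T₂ (m, k)) :=
    claim1.of_abs.congr fun m => hA m
  have hsumB : Summable fun m : ℕ => ∑' k : ℕ, (T₃ (m, k) + T₄ (m, k)) :=
    claim2.of_abs.congr fun m => hB m
  rw [tsum_congr hA, tsum_congr hB]
  have step1 : 4 * π * μ₁ * (∑' m : ℕ, ∑' k : ℕ, (T₁ (m, k) + T₂ (m, k))) +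
      4 * π * μ₂ * (∑' m : ℕ, ∑' k : ℕ, (T₃ (m, k) + T₄ (m, k))) =
      4 * π * ∑' m : ℕ, (μ₁ * ∑' k : ℕ, (T₁ (m, k) + T₂ (m, k)) +
        μ₂ * ∑' k : ℕ, (T₃ (m, k) + T₄ (m, k))) := by
    rw [Summable.tsum_add (hsumA.mul_left μ₁) (hsumB.mul_left μ₂), tsum_mul_left, tsum_mul_left]
    ring
  rw [step1]
  have step2 : ∀ m : ℕ, μ₁ * ∑' k : ℕ, (T₁ (m, k) + T₂ (m, k)) +
      μ₂ * ∑' k : ℕ, (T₃ (m, k) + T₄ (m, k)) =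
      ∑' k : ℕ, (μ₁ * (T₁ (m, k) + T₂ (m, k)) + μ₂ * (T₃ (m, k) + T₄ (m, k))) := fun m => by
    rw [Summable.tsum_add (((hkfib₁ m).add (hkfib₂ m)).mul_left μ₁)
        (((hkfib₃ m).add (hkfib₄ m)).mul_left μ₂), tsum_mul_left, tsum_mul_left]
  rw [tsum_congr step2]
  have huncurry : Summable (Function.uncurry fun m k : ℕ =>
      μ₁ * (T₁ (m, k) + T₂ (m, k)) + μ₂ * (T₃ (m, k) + T₄ (m, k))) :=
    hGs.congr fun p => rfl
  rw [← Summable.tsum_comm huncurry]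
  rw [tsum_congr hQ, tsum_mul_left]

end
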